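/- arXiv:2405.09859 — 2 statements merged into one kernel-verified Lean document; each statement's English description precedes it below -/
import Mathlib

section
/- Let B ≥ 2 be an integer, let c be the unique positive solution of e^c = 1 + 2c (c ≈ 1.25643), and let δ ∈ [0,1) satisfy δ < 1 − c/log(B+1). Then the optimal δ-CVaR competitive ratio for discrete-time ski rental with buying cost B is strictly below the deterministic optimum: α_δ^{B,*} < 2 − 1/B. -/
open Finset Set

/-- Conditional value-at-risk (loss version) of a discrete random variable: the strategy
`p` is a probability vector over `Fin n`, `f` gives the loss of each outcome. For
`δ ∈ [0,1)` it is `inf_t { t + (1-δ)⁻¹ Σ_i p_i max(f_i - t, 0) }`; for `δ = 1` it is the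
maximum loss over the support of `p`. -/
noncomputable def dcvar {n : ℕ} (δ : ℝ) (p : Fin n → ℝ) (f : Fin n → ℝ) : ℝ :=
  if δ = 1 then ⨆ i : {i : Fin n // p i ≠ 0}, f i
  else ⨅ t : ℝ, t + (1 - δ)⁻¹ * ∑ i, p i * max (f i - t) 0

/-- Discrete-time ski rental cost with buying cost `B`: purchase at the start of day
`x+1`, season lasts `s+1` days (indices in `Fin B` represent days `1,…,B`). The cost is
`s` if the player never buys, and `B + x` (i.e. `B + day - 1`) if it buys. -/
noncomputable def dsrCost (B : ℕ) (s x : Fin B) : ℝ :=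
  if (x : ℕ) ≤ (s : ℕ) then (B : ℝ) + (x : ℕ) else (s : ℕ) + 1

/-- `δ`-CVaR competitive ratio of strategy `p` at adversary decision (season length) `s`. -/
noncomputable def dsrRatio (δ : ℝ) (B : ℕ) (p : Fin B → ℝ) (s : Fin B) : ℝ :=
  dcvar δ p (dsrCost B s) / min ((s : ℕ) + 1 : ℝ) (B : ℝ)

/-- `δ`-CVaR competitive ratio of strategy `p`: worst case over adversary decisions. -/
noncomputable def dsrCR (δ : ℝ) (B : ℕ) (p : Fin B → ℝ) : ℝ :=
  ⨆ s : Fin B, dsrRatio δ B p s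

/-- Optimal `δ`-CVaR competitive ratio over all strategies (probability vectors on `[B]`). -/
noncomputable def dsrOpt (δ : ℝ) (B : ℕ) : ℝ :=
  ⨅ p : {q : Fin B → ℝ // (∀ i, 0 ≤ q i) ∧ ∑ i, q i = 1}, dsrCR δ B (p : Fin B → ℝ)

/-!
The witness is the strategy buying on day `x + 1` with probability `w_x / log (B + 1)`, where
`w_x = log ((B + 1 - x) / (B - x))`. For a season of `s + 1` days, CVaR is bounded by its
Rockafellar–Uryasev objective at a single threshold `t`. Since `w_x (B + 1 - x) ≥ 1`, the
expected excess over `t` telescopes to at most `c * D` with `t + D ≤ (2 - 1/B)(s + 1)`, and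
`c / log (B + 1) < 1 - δ` makes the CVaR strictly smaller. If `(1 + 2c)(B - s) > B + 1` take
`t = s + 1`: the estimate is then a convex function of `u = B - s`, checked at `u = B` and at
`u = (B + 1)/(1 + 2c)`, where `log ((B + 1)/u) = c`. Otherwise take `t = B + a` with `B + 1 - a`
the integer just above `(1 + 2c)(B - s)`, and use `log x ≤ x - 1`. The hypothesis on `δ` also
forces `c < log (B + 1)`, i.e. `2c < B`.
-/

open Real

lemma nine_div_eight_lt_of_exp_eq {c : ℝ} (hc : 0 < c) (hce : exp c = 1 + 2 * c) :
    9 / 8 < c := by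
  by_contra! h
  have hexp : exp (9 / 8) < 13 / 4 := by
    have h18 : exp (1 / 8) < 1 / (1 - 1 / 8) :=
      exp_bound_div_one_sub_of_interval' (by norm_num) (by norm_num)
    have hsplit : exp (9 / 8) = exp 1 * exp (1 / 8) := by rw [← exp_add]; norm_num
    nlinarith [exp_one_lt_d9, exp_pos 1]
  -- convexity of `exp` on the chord from `0` to `9/8` puts `exp c` strictly below `1 + 2c`
  have hchord := convexOn_exp.2 (mem_univ 0) (mem_univ (9 / 8))
    (by linarith : 0 ≤ 1 - 8 * c / 9) (by positivity : 0 ≤ 8 * c / 9) (by ring)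
  simp only [smul_eq_mul, mul_zero, zero_add, exp_zero, mul_one] at hchord
  rw [show 8 * c / 9 * (9 / 8) = c by ring, hce] at hchord
  nlinarith

noncomputable def skiWeight (B x : ℕ) : ℝ := log ((B : ℝ) + 1 - x) - log ((B : ℝ) - x)

noncomputable def logStrategy (B : ℕ) : Fin B → ℝ :=
  fun x => skiWeight B x / log ((B : ℝ) + 1)

lemma sum_Ico_skiWeight (B : ℕ) {m n : ℕ} (hmn : m ≤ n) :
    ∑ x ∈ Finset.Ico m n, skiWeight B x
      = log ((B : ℝ) + 1 - m) - log ((B : ℝ) + 1 - n) := by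
  have := Finset.sum_Ico_sub (fun k : ℕ => -log ((B : ℝ) + 1 - k)) hmn
  simp only [sub_neg_eq_add, neg_add_eq_sub] at this
  rw [← this]
  refine Finset.sum_congr rfl fun x _ => ?_
  rw [skiWeight]
  push_cast
  ring_nf

lemma skiWeight_nonneg {B x : ℕ} (hx : x < B) : 0 ≤ skiWeight B x := by
  have : (x : ℝ) < B := by exact_mod_cast hx
  unfold skiWeight
  linarith [log_le_log (by linarith) (by linarith : (B : ℝ) - x ≤ B + 1 - x)]

lemma one_le_skiWeight_mul {B x : ℕ} (hx : x < B) : 1 ≤ skiWeight B x * (B + 1 - x) := by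
  have hxB : (x : ℝ) + 1 ≤ B := by exact_mod_cast hx
  have hpos : (0 : ℝ) < B - x := by linarith
  have hpos' : (0 : ℝ) < B + 1 - x := by linarith
  have hlog := one_sub_inv_le_log_of_pos (div_pos hpos' hpos)
  rw [log_div hpos'.ne' hpos.ne', inv_div] at hlog
  rw [skiWeight]
  have : 1 - ((B : ℝ) - x) / (B + 1 - x) = 1 / (B + 1 - x) := by field_simp; ring
  rw [this, div_le_iff₀ hpos'] at hlog
  exact hlog

lemma sum_Ico_skiWeight_mul_le (B : ℕ) {m n : ℕ} (hmn : m ≤ n) (hnB : n ≤ B) (C : ℝ) :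
    ∑ x ∈ Finset.Ico m n, skiWeight B x * (C + x)
      ≤ (C + B + 1) * (log ((B : ℝ) + 1 - m) - log ((B : ℝ) + 1 - n)) - (n - m) := by
  calc ∑ x ∈ Finset.Ico m n, skiWeight B x * (C + x)
      ≤ ∑ x ∈ Finset.Ico m n, ((C + B + 1) * skiWeight B x - 1) := by
        refine Finset.sum_le_sum fun x hx => ?_
        have := one_le_skiWeight_mul ((Finset.mem_Ico.1 hx).2.trans_le hnB)
        linarith
    _ = _ := by
        rw [Finset.sum_sub_distrib, ← Finset.mul_sum, sum_Ico_skiWeight B hmn]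
        simp [Nat.cast_sub hmn]

lemma logStrategy_nonneg {B : ℕ} (x : Fin B) : 0 ≤ logStrategy B x :=
  div_nonneg (skiWeight_nonneg x.2) (log_nonneg (by simp))

lemma sum_logStrategy {B : ℕ} (hB : 0 < B) : ∑ x, logStrategy B x = 1 := by
  have hL : 0 < log ((B : ℝ) + 1) := log_pos (by simp [hB])
  rw [show ∑ x, logStrategy B x = ∑ x : Fin B, skiWeight B x / log ((B : ℝ) + 1) from rfl,
    Fin.sum_univ_eq_sum_range (fun x => skiWeight B x / log ((B : ℝ) + 1)),
    ← Finset.sum_div, Finset.range_eq_Ico, sum_Ico_skiWeight B (Nat.zero_le B)]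
  simp [hL.ne']

section CVaR

variable {n : ℕ} {δ : ℝ} {p : Fin n → ℝ}

lemma sum_mul_le_cvar_objective (hδ : δ ∈ Ico (0 : ℝ) 1) (hp0 : ∀ i, 0 ≤ p i)
    (hp1 : ∑ i, p i = 1) (f : Fin n → ℝ) (t : ℝ) :
    ∑ i, p i * f i ≤ t + (1 - δ)⁻¹ * ∑ i, p i * max (f i - t) 0 := by
  have hexcess : 0 ≤ ∑ i, p i * max (f i - t) 0 :=
    Finset.sum_nonneg fun i _ => mul_nonneg (hp0 i) (le_max_right _ _)
  have hinv : 1 ≤ (1 - δ)⁻¹ := one_le_inv₀ (by linarith [hδ.2]) |>.2 (by linarith [hδ.1])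
  calc ∑ i, p i * f i = t + ∑ i, p i * (f i - t) := by
        simp only [mul_sub, Finset.sum_sub_distrib, ← Finset.sum_mul, hp1]; ring
    _ ≤ t + ∑ i, p i * max (f i - t) 0 := by
        gcongr with i; exact hp0 i; exact le_max_left _ _
    _ ≤ t + (1 - δ)⁻¹ * ∑ i, p i * max (f i - t) 0 := by
        gcongr; exact le_mul_of_one_le_left hexcess hinv

lemma dcvar_le (hδ : δ ∈ Ico (0 : ℝ) 1) (hp0 : ∀ i, 0 ≤ p i) (hp1 : ∑ i, p i = 1)
    (f : Fin n → ℝ) (t : ℝ) :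
    dcvar δ p f ≤ t + (1 - δ)⁻¹ * ∑ i, p i * max (f i - t) 0 := by
  rw [dcvar, if_neg hδ.2.ne]
  exact ciInf_le ⟨_, forall_mem_range.2 (sum_mul_le_cvar_objective hδ hp0 hp1 f)⟩ t

lemma sum_mul_le_dcvar (hδ : δ ∈ Ico (0 : ℝ) 1) (hp0 : ∀ i, 0 ≤ p i)
    (hp1 : ∑ i, p i = 1) (f : Fin n → ℝ) : ∑ i, p i * f i ≤ dcvar δ p f := by
  rw [dcvar, if_neg hδ.2.ne]
  exact le_ciInf (sum_mul_le_cvar_objective hδ hp0 hp1 f)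

end CVaR

lemma dsrCost_nonneg (B : ℕ) (s x : Fin B) : 0 ≤ dsrCost B s x := by
  unfold dsrCost; split_ifs <;> positivity

lemma dsrRatio_eq {δ : ℝ} {B : ℕ} (p : Fin B → ℝ) (s : Fin B) :
    dsrRatio δ B p s = dcvar δ p (dsrCost B s) / ((s : ℕ) + 1) := by
  rw [dsrRatio, min_eq_left (by exact_mod_cast s.2)]

lemma dsrOpt_le_dsrCR {δ : ℝ} (hδ : δ ∈ Ico (0 : ℝ) 1) {B : ℕ} {p : Fin B → ℝ}
    (hp0 : ∀ i, 0 ≤ p i) (hp1 : ∑ i, p i = 1) : dsrOpt δ B ≤ dsrCR δ B p := by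
  have hbdd : BddBelow (range fun q : {q : Fin B → ℝ // (∀ i, 0 ≤ q i) ∧ ∑ i, q i = 1} =>
      dsrCR δ B q) := by
    refine ⟨0, forall_mem_range.2 fun q => Real.iSup_nonneg fun s => ?_⟩
    rw [dsrRatio_eq]
    have hmean : 0 ≤ ∑ i, q.1 i * dsrCost B s i :=
      Finset.sum_nonneg fun i _ => mul_nonneg (q.2.1 i) (dsrCost_nonneg B s i)
    have := sum_mul_le_dcvar hδ q.2.1 q.2.2 (dsrCost B s)
    exact div_nonneg (by linarith) (by positivity)
  exact ciInf_le hbdd ⟨p, hp0, hp1⟩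

lemma dsrCR_lt_of_forall_lt {δ r : ℝ} {B : ℕ} [NeZero B] {p : Fin B → ℝ}
    (h : ∀ s, dsrRatio δ B p s < r) : dsrCR δ B p < r := by
  obtain ⟨s, hs⟩ := Finite.exists_max (dsrRatio δ B p)
  exact (ciSup_le hs).trans_lt (h s)

lemma sum_logStrategy_mul_excess {B : ℕ} (s : Fin B) {t : ℝ} (ht : (s : ℕ) + 1 ≤ t) :
    ∑ i, logStrategy B i * max (dsrCost B s i - t) 0
      = (∑ x ∈ Finset.range ((s : ℕ) + 1), skiWeight B x * max (B + x - t) 0)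
          / log ((B : ℝ) + 1) := by
  let g : ℕ → ℝ := fun x =>
    skiWeight B x / log ((B : ℝ) + 1) * max ((if x ≤ s then (B : ℝ) + x else s + 1) - t) 0
  have hg : ∀ x ∈ Finset.Ico ((s : ℕ) + 1) B, g x = 0 := fun x hx => by
    simp [g, if_neg (by simp at hx; omega : ¬x ≤ s), ht]
  rw [show ∑ i, logStrategy B i * max (dsrCost B s i - t) 0 = ∑ i : Fin B, g i from rfl,
    Fin.sum_univ_eq_sum_range g, ← Finset.sum_range_add_sum_Ico g s.2,
    Finset.sum_eq_zero hg, add_zero, Finset.sum_div]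
  refine Finset.sum_congr rfl fun x hx => ?_
  simp [g, Nat.lt_succ_iff.1 (Finset.mem_range.1 hx)]
  ring

lemma convexOn_add_mul_sub_log (R L K M : ℝ) :
    ConvexOn ℝ (Ioc 0 R) (fun u => (R + u) * (L - log u) - K * (M - u)) := by
  refine convexOn_of_hasDerivWithinAt2_nonneg (convex_Ioc 0 R)
    (f' := fun u => L - log u - (R + u) * u⁻¹ + K) (f'' := fun u => (R - u) / u ^ 2)
    ?_ (fun x hx => ?_) (fun x hx => ?_) (fun x hx => ?_)
  · exact ContinuousOn.sub (by fun_prop (disch := exact fun x hx => hx.1.ne')) (by fun_prop)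
  all_goals rw [interior_Ioc] at hx
  · have h := ((hasDerivAt_id x).const_add R).mul ((hasDerivAt_log hx.1.ne').const_sub L)
      |>.sub (((hasDerivAt_id x).const_sub M).const_mul K)
    exact (h.congr_deriv (by simp only [id]; ring)).hasDerivWithinAt
  · have h := ((hasDerivAt_log hx.1.ne').const_sub L).sub
      (((hasDerivAt_id x).const_add R).mul (hasDerivAt_inv hx.1.ne')) |>.add_const K
    refine (h.congr_deriv ?_).hasDerivWithinAt
    simp only [id]
    field_simp
    ring
  · exact div_nonneg (by linarith [hx.2]) (by positivity)

lemma add_mul_sub_log_le_of_mem_Icc {R L K M lo u : ℝ} (hlo : 0 < lo) (hu : u ∈ Icc lo R)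
    (h_lo : (R + lo) * (L - log lo) ≤ K * (M - lo))
    (h_R : (R + R) * (L - log R) ≤ K * (M - R)) :
    (R + u) * (L - log u) ≤ K * (M - u) := by
  have hseg := (convexOn_add_mul_sub_log R L K M).le_on_segment ⟨hlo, hu.1.trans hu.2⟩
    ⟨hlo.trans_le (hu.1.trans hu.2), le_rfl⟩ (by rwa [segment_eq_Icc (hu.1.trans hu.2)])
  have := max_le (sub_nonpos.2 h_lo) (sub_nonpos.2 h_R)
  linarith

lemma mul_log_sub_log_le {c w A : ℝ} (hc : 0 < c) (hce : exp c = 1 + 2 * c) (hw : 1 ≤ w)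
    (hlo : (1 + 2 * c) * w ≤ A) (hhi : A < (1 + 2 * c) * w + 1) :
    A * (log (A - 1) - log w) ≤ c * (A - 2 * w) + (A - w - 1) := by
  have hρw : 1 < (1 + 2 * c) * w := by nlinarith
  have hA : 0 < A - 1 := by linarith
  have hlog : log (A - 1) - log w ≤ c + ((A - 1) / ((1 + 2 * c) * w) - 1) := by
    have hsplit :
        log (A - 1) - log w = log (1 + 2 * c) + log ((A - 1) / ((1 + 2 * c) * w)) := by
      rw [← log_mul (by positivity) (by positivity), ← log_div hA.ne' (by positivity)]
      congr 1; field_simp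
    rw [hsplit, show log (1 + 2 * c) = c by rw [← hce, log_exp]]
    linarith [log_le_sub_one_of_pos (by positivity : 0 < (A - 1) / ((1 + 2 * c) * w))]
  -- `A - 1 - (1 + 2c) w < 0`, so scaling it by `A / ((1 + 2c) w) ≥ 1` lowers it
  have hscale : A * ((A - 1) / ((1 + 2 * c) * w) - 1) ≤ A - 1 - (1 + 2 * c) * w := by
    rw [div_sub_one (by positivity), mul_div_assoc', div_le_iff₀ (by positivity)]
    nlinarith
  nlinarith [mul_le_mul_of_nonneg_left hlog (by linarith : 0 ≤ A)]

lemma add_self_mul_log_add_one_sub_log_le {B c : ℝ} (hB : 3 ≤ B) (hc : 9 / 8 < c) :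
    (B + B) * (log (B + 1) - log B) ≤ (1 + c * (B - 1) / B) * (B + 1 - B) := by
  have hB0 : 0 < B := by linarith
  -- `log z < sinh (log z) = (z - z⁻¹) / 2` at `z = (B + 1) / B`
  have hsinh := self_lt_sinh_iff.2 (log_pos (by rw [lt_div_iff₀ hB0]; linarith :
    1 < (B + 1) / B))
  rw [sinh_log (by positivity), log_div (by positivity) hB0.ne', inv_div] at hsinh
  have hchord : (B + B) * (log (B + 1) - log B) ≤ (2 * B + 1) / (B + 1) := by
    have : B * ((B + 1) / B - B / (B + 1)) = (2 * B + 1) / (B + 1) := by field_simp; ring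
    nlinarith
  have hK : (2 * B + 1) / (B + 1) ≤ 1 + c * (B - 1) / B := by
    have hsq : B / (B + 1) ≤ c * (B - 1) / B := by
      have h9 : 9 ≤ B * B := by nlinarith
      rw [div_le_div_iff₀ (by positivity) hB0]
      nlinarith [mul_le_mul_of_nonneg_left h9 (by linarith : (0 : ℝ) ≤ c - 9 / 8)]
    have : (2 * B + 1) / (B + 1) = 1 + B / (B + 1) := by field_simp; ring
    linarith
  linarith

lemma add_mul_log_sub_log_le_at_threshold {B c : ℝ} (hc : 0 < c) (hce : exp c = 1 + 2 * c)
    (hcB : 2 * c ≤ B) (hB : 0 < B) :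
    (B + (B + 1) / (1 + 2 * c)) * (log (B + 1) - log ((B + 1) / (1 + 2 * c)))
      ≤ (1 + c * (B - 1) / B) * (B + 1 - (B + 1) / (1 + 2 * c)) := by
  rw [log_div (by positivity) (by positivity), ← hce, log_exp, sub_sub_cancel, hce,
    ← sub_nonneg]
  have : (1 + c * (B - 1) / B) * (B + 1 - (B + 1) / (1 + 2 * c)) - (B + (B + 1) / (1 + 2 * c)) * c
      = c * (B - 2 * c) / ((1 + 2 * c) * B) := by field_simp; ring
  rw [this]
  exact div_nonneg (mul_nonneg hc.le (by linarith)) (by positivity)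

lemma sum_skiWeight_rent_le {B : ℕ} {c : ℝ} (hc : 0 < c) (hce : exp c = 1 + 2 * c)
    (hcB : 2 * c < B) (s : Fin B) (hs : (B : ℝ) + 1 < (1 + 2 * c) * (B - s)) :
    ∑ x ∈ Finset.range ((s : ℕ) + 1), skiWeight B x * max ((B : ℝ) + x - ((s : ℕ) + 1)) 0
      ≤ c * ((B - 1) / B * ((s : ℕ) + 1)) := by
  have hc98 := nine_div_eight_lt_of_exp_eq hc hce
  have hB2 : 2 < B := by exact_mod_cast (by linarith : (2 : ℝ) < B)
  have hB3 : (3 : ℝ) ≤ B := by exact_mod_cast hB2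
  have hsB : (s : ℝ) + 1 ≤ B := by exact_mod_cast s.2
  have hmax : ∀ x ∈ Finset.Ico 0 ((s : ℕ) + 1),
      skiWeight B x * max ((B : ℝ) + x - ((s : ℕ) + 1)) 0
        = skiWeight B x * ((B - ((s : ℕ) + 1)) + x) :=
    fun x _ => by rw [max_eq_left (by linarith [x.cast_nonneg (α := ℝ)]), add_sub_right_comm]
  have hsum := sum_Ico_skiWeight_mul_le B (Nat.zero_le _) s.2 (B - ((s : ℕ) + 1))
  push_cast at hsum
  rw [sub_zero, show (B : ℝ) + 1 - (s + 1) = B - s by ring] at hsum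
  have hgap := add_mul_sub_log_le_of_mem_Icc (L := log (B + 1)) (M := B + 1)
    (K := 1 + c * (B - 1) / B) (lo := (B + 1) / (1 + 2 * c)) (u := B - s) (by positivity)
    ⟨by rw [div_le_iff₀ (by positivity)]; linarith,
      by linarith [(s : ℕ).cast_nonneg (α := ℝ)]⟩
    (add_mul_log_sub_log_le_at_threshold hc hce hcB.le (by linarith))
    (add_self_mul_log_add_one_sub_log_le hB3 hc98)
  rw [Finset.range_eq_Ico, Finset.sum_congr rfl hmax]
  calc _ ≤ (B - ((s : ℕ) + 1) + B + 1) * (log (B + 1) - log (B - s)) - (s + 1) := by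
        simpa using hsum
    _ ≤ (1 + c * (B - 1) / B) * (B + 1 - (B - s)) - (s + 1) := by linarith
    _ = c * ((B - 1) / B * ((s : ℕ) + 1)) := by ring

lemma sum_skiWeight_buy_le {B : ℕ} {c : ℝ} (hc : 0 < c) (hce : exp c = 1 + 2 * c)
    (s : Fin B) {a : ℕ} (has : a ≤ s) (hlo : (1 + 2 * c) * (B - s) ≤ B + 1 - a)
    (hhi : (B : ℝ) + 1 - a < (1 + 2 * c) * (B - s) + 1) :
    ∑ x ∈ Finset.range ((s : ℕ) + 1), skiWeight B x * max ((B : ℝ) + x - (B + a)) 0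
      ≤ c * (B + 1 - a - 2 * (B - s)) := by
  simp only [add_sub_add_left_eq_sub]
  have hsB : (s : ℝ) + 1 ≤ B := by exact_mod_cast s.2
  have hlow : ∀ x ∈ Finset.range (a + 1), skiWeight B x * max ((x : ℝ) - a) 0 = 0 :=
    fun x hx => by
      rw [max_eq_right (by simpa using Nat.lt_succ_iff.1 (Finset.mem_range.1 hx)), mul_zero]
  have hhigh : ∀ x ∈ Finset.Ico (a + 1) ((s : ℕ) + 1),
      skiWeight B x * max ((x : ℝ) - a) 0 = skiWeight B x * (-a + x) := fun x hx => by
    have : (a : ℝ) + 1 ≤ x := by exact_mod_cast (Finset.mem_Ico.1 hx).1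
    rw [max_eq_left (by linarith), neg_add_eq_sub]
  have hsum := sum_Ico_skiWeight_mul_le B (by omega : a + 1 ≤ (s : ℕ) + 1) s.2 (-a)
  push_cast at hsum
  rw [show (B : ℝ) + 1 - (a + 1) = (B + 1 - a) - 1 by ring,
    show (B : ℝ) + 1 - (s + 1) = B - s by ring] at hsum
  have hcore := mul_log_sub_log_le hc hce (by linarith) hlo hhi
  rw [← Finset.sum_range_add_sum_Ico _ (by omega : a + 1 ≤ (s : ℕ) + 1),
    Finset.sum_eq_zero hlow, zero_add, Finset.sum_congr rfl hhigh]
  linarith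

lemma dcvar_logStrategy_lt_of_sum_le {B : ℕ} {c δ : ℝ} (hδ : δ ∈ Ico (0 : ℝ) 1)
    (hB : 0 < B) (hkey : c / log ((B : ℝ) + 1) < 1 - δ) (s : Fin B) {t D : ℝ}
    (ht : (s : ℕ) + 1 ≤ t) (hD : 0 < D)
    (hsum : ∑ x ∈ Finset.range ((s : ℕ) + 1), skiWeight B x * max (B + x - t) 0 ≤ c * D) :
    dcvar δ (logStrategy B) (dsrCost B s) < t + D := by
  have hL : 0 < log ((B : ℝ) + 1) := log_pos (by simp [hB])
  have hrisk : (∑ x ∈ Finset.range ((s : ℕ) + 1), skiWeight B x * max (B + x - t) 0)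
      / log ((B : ℝ) + 1) < (1 - δ) * D :=
    calc _ ≤ c * D / log ((B : ℝ) + 1) := div_le_div_of_nonneg_right hsum hL.le
      _ = c / log ((B : ℝ) + 1) * D := by ring
      _ < (1 - δ) * D := mul_lt_mul_of_pos_right hkey hD
  have hle := dcvar_le hδ logStrategy_nonneg (sum_logStrategy hB) (dsrCost B s) t
  rw [sum_logStrategy_mul_excess s ht] at hle
  linarith [(inv_mul_lt_iff₀ (by linarith [hδ.2] : 0 < 1 - δ)).2 hrisk]

lemma dcvar_logStrategy_lt {B : ℕ} {c δ : ℝ} (hc : 0 < c) (hce : exp c = 1 + 2 * c)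
    (hδ : δ ∈ Ico (0 : ℝ) 1) (hkey : c / log ((B : ℝ) + 1) < 1 - δ) (hcB : 2 * c < B)
    (s : Fin B) : dcvar δ (logStrategy B) (dsrCost B s) < (2 - 1 / B) * ((s : ℕ) + 1) := by
  have hB : 0 < B := s.pos
  have hB0 : (0 : ℝ) < B := by exact_mod_cast hB
  have hsB : (s : ℝ) + 1 ≤ B := by exact_mod_cast s.2
  have hc98 := nine_div_eight_lt_of_exp_eq hc hce
  by_cases hrent : (B : ℝ) + 1 < (1 + 2 * c) * (B - s)
  · have hD : 0 < (B - 1) / B * ((s : ℕ) + 1 : ℝ) := by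
      have : (1 : ℝ) < B := by linarith
      positivity
    calc _ < ((s : ℕ) + 1) + (B - 1) / B * ((s : ℕ) + 1 : ℝ) :=
          dcvar_logStrategy_lt_of_sum_le hδ hB hkey s le_rfl hD
            (sum_skiWeight_rent_le hc hce hcB s hrent)
      _ = (2 - 1 / B) * ((s : ℕ) + 1) := by field_simp; ring
  · -- buy threshold `B + a`, with `B + 1 - a` the integer just above `(1 + 2c)(B - s)`
    replace hrent := not_lt.1 hrent
    set a := ⌊(B : ℝ) + 1 - (1 + 2 * c) * (B - s)⌋₊ with ha
    have hpos : 0 ≤ (B : ℝ) + 1 - (1 + 2 * c) * (B - s) := by linarith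
    have hfloor := Nat.floor_le hpos
    have hfloor' := Nat.lt_floor_add_one ((B : ℝ) + 1 - (1 + 2 * c) * (B - s))
    rw [← ha] at hfloor hfloor'
    have has : a ≤ s := by
      have : (a : ℝ) < s + 1 := by nlinarith
      exact_mod_cast Nat.lt_succ_iff.1 (by exact_mod_cast this)
    have hsum := sum_skiWeight_buy_le hc hce s has (by linarith) (by linarith)
    calc _ < ((B : ℝ) + a) + (B + 1 - a - 2 * (B - s)) :=
          dcvar_logStrategy_lt_of_sum_le hδ hB hkey s (by linarith)
            (by nlinarith) hsum
      _ ≤ (2 - 1 / (B : ℝ)) * ((s : ℕ) + 1) := by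
          rw [sub_mul, div_mul_eq_mul_div, one_mul]
          linarith [(div_le_one hB0).2 hsB]

/-- Theorem 6(i): for `δ < 1 - c/log(B+1)` (with `e^c = 1 + 2c`, `c > 0`) the optimal
`δ`-CVaR competitive ratio for discrete-time ski rental strictly improves on the
deterministic optimum `2 - 1/B`. -/
theorem dsr_phase_transition_i (B : ℕ) (hB : 2 ≤ B) (c : ℝ) (hc : 0 < c)
    (hce : Real.exp c = 1 + 2 * c) (δ : ℝ) (hδ : δ ∈ Ico (0:ℝ) 1)
    (hsmall : δ < 1 - c / Real.log (B + 1)) :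
    dsrOpt δ B < 2 - 1 / B := by
  have hL : 0 < log ((B : ℝ) + 1) := log_pos (by simp; omega)
  have hkey : c / log ((B : ℝ) + 1) < 1 - δ := by linarith
  have hcB : 2 * c < B := by
    have hcL : c < log ((B : ℝ) + 1) := by
      rw [← div_lt_one hL]; linarith [hδ.1]
    rw [lt_log_iff_exp_lt (by positivity), hce] at hcL
    linarith
  have : NeZero B := ⟨by omega⟩
  calc dsrOpt δ B ≤ dsrCR δ B (logStrategy B) :=
        dsrOpt_le_dsrCR hδ logStrategy_nonneg (sum_logStrategy (by omega))
    _ < 2 - 1 / B := dsrCR_lt_of_forall_lt fun s => by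
        rw [dsrRatio_eq, div_lt_iff₀ (by positivity)]
        exact dcvar_logStrategy_lt hc hce hδ hkey hcB s
end

section
/- Let 0 < L ≤ U, let X be a random variable supported in [L,U] with CDF F_X and inverse CDF F_X^{-1}, fix δ ∈ [0,1) and a maximal price v ∈ [L,U]. Then the reward-CVaR at level δ of the one-max-search profit P(X,v) = L·1_{X>v} + X·1_{X≤v} equals L if F_X(v) ≤ δ, and equals (1−δ)⁻¹·[ (1 − F_X(v))·L + ∫₀^{F_X(v)−δ} F_X^{-1}(t) dt ] otherwise. -/
open MeasureTheory Set

/-- Reward conditional value-at-risk of `f` under measure `μ` at level `δ ∈ [0,1)`: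
`CVaR_δ[Y] = sup_t { t - (1-δ)⁻¹ E[max(t - Y, 0)] }`. -/
noncomputable def rcvar (δ : ℝ) (μ : Measure ℝ) (f : ℝ → ℝ) : ℝ :=
  ⨆ t : ℝ, t - (1 - δ)⁻¹ * ∫ x, max (t - f x) 0 ∂μ

/-- One-max search profit of a random threshold `x` when the maximum price is `v`
and the lower price bound is `L`. -/
noncomputable def omsProfit (L v x : ℝ) : ℝ := if x ≤ v then x else L

/-- `δ`-CVaR competitive ratio of the random-threshold strategy `μ` at maximal price `v`. -/
noncomputable def omsRatio (δ L : ℝ) (μ : Measure ℝ) (v : ℝ) : ℝ :=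
  v / rcvar δ μ (fun x => omsProfit L v x)

/-- `δ`-CVaR competitive ratio of the random-threshold strategy `μ` for one-max search
with price bounds `L ≤ U`. -/
noncomputable def omsCR (δ L U : ℝ) (μ : Measure ℝ) : ℝ :=
  ⨆ v : Icc L U, omsRatio δ L μ (v : ℝ)

/-- CDF of the law `μ`. -/
noncomputable def cdfR (μ : Measure ℝ) (x : ℝ) : ℝ := (μ (Iic x)).toReal

/-- Inverse CDF of a law `μ` supported in `[a,b]`: `F⁻¹(p) = inf {x ∈ [a,b] : F(x) ≥ p}`. -/
noncomputable def invCdf (a b : ℝ) (μ : Measure ℝ) (p : ℝ) : ℝ :=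
  sInf {x | x ∈ Icc a b ∧ p ≤ cdfR μ x}

/-!
The supremum defining the reward CVaR is attained at any `(1-δ)`-quantile `t₀` of the profit
`P`: the map `t ↦ E(t - P)⁺` is convex with one-sided slopes `μ{P < t₀} ≤ 1 - δ ≤ μ{P ≤ t₀}`
at `t₀`, so `CVaR_δ[P] = t₀ - (1-δ)⁻¹ E(t₀ - P)⁺`. As `P = X` on `{X ≤ v}` and `P = L` on
`{X > v}`, such a quantile is `L` when `F(v) ≤ δ` and `q = F⁻¹(F(v) - δ)` otherwise. Two layer-cake
computations finish the proof: `E(q - P)⁺ = (q - L)(1 - F(v)) + ∫_L^q F`, and, through the Galois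
connection `F⁻¹(p) ≤ x ↔ p ≤ F(x)`, `∫₀^c F⁻¹ = c F⁻¹(c) - ∫_L^{F⁻¹(c)} F`.
-/

open ProbabilityTheory

section Cdf

variable {μ : Measure ℝ} {L U x : ℝ}

lemma cdfR_eq_cdf [IsProbabilityMeasure μ] : cdfR μ = cdf μ :=
  funext fun x => (cdf_eq_real μ x).symm

lemma monotone_cdfR [IsFiniteMeasure μ] : Monotone (cdfR μ) := fun _ _ h =>
  ENNReal.toReal_mono (measure_ne_top _ _) (measure_mono (Iic_subset_Iic.2 h))

lemma cdfR_nonneg (x : ℝ) : 0 ≤ cdfR μ x := ENNReal.toReal_nonneg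

lemma cdfR_le_one [IsProbabilityMeasure μ] (x : ℝ) : cdfR μ x ≤ 1 :=
  cdfR_eq_cdf (μ := μ) ▸ cdf_le_one μ x

lemma cdfR_eq_zero_of_lt (hsupp : μ (Icc L U)ᶜ = 0) (hx : x < L) : cdfR μ x = 0 := by
  have hnull : μ (Iic x) = 0 :=
    measure_mono_null (fun y (hy : y ≤ x) (hyLU : y ∈ Icc L U) => hx.not_ge (hyLU.1.trans hy)) hsupp
  simp [cdfR, hnull]

lemma cdfR_eq_one_of_le [IsProbabilityMeasure μ] (hsupp : μ (Icc L U)ᶜ = 0) (hx : U ≤ x) :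
    cdfR μ x = 1 := by
  have hnull : μ (Iic x)ᶜ = 0 :=
    measure_mono_null (compl_subset_compl.2 fun y hy => hy.2.trans hx) hsupp
  simp [cdfR, (prob_compl_eq_zero_iff measurableSet_Iic).1 hnull]

end Cdf

section InvCdf

variable {μ : Measure ℝ} {L U p : ℝ}

lemma invCdf_set_bddBelow : BddBelow {x | x ∈ Icc L U ∧ p ≤ cdfR μ x} :=
  ⟨L, fun _ hx => hx.1.1⟩

variable [IsProbabilityMeasure μ]

lemma invCdf_set_nonempty (hLU : L ≤ U) (hsupp : μ (Icc L U)ᶜ = 0) (hp : p ≤ 1) :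
    {x | x ∈ Icc L U ∧ p ≤ cdfR μ x}.Nonempty :=
  ⟨U, ⟨hLU, le_rfl⟩, by rwa [cdfR_eq_one_of_le hsupp le_rfl]⟩

lemma invCdf_mem_Icc (hLU : L ≤ U) (hsupp : μ (Icc L U)ᶜ = 0) (hp : p ≤ 1) :
    invCdf L U μ p ∈ Icc L U :=
  ⟨le_csInf (invCdf_set_nonempty hLU hsupp hp) fun _ hx => hx.1.1,
    csInf_le invCdf_set_bddBelow ⟨⟨hLU, le_rfl⟩, by rwa [cdfR_eq_one_of_le hsupp le_rfl]⟩⟩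

/- Right-continuity of the CDF: `F` exceeds `p` just to the right of `F⁻¹(p)`, hence at it. -/
lemma le_cdfR_invCdf (hLU : L ≤ U) (hsupp : μ (Icc L U)ᶜ = 0) (hp : p ≤ 1) :
    p ≤ cdfR μ (invCdf L U μ p) := by
  refine ge_of_tendsto (cdfR_eq_cdf (μ := μ) ▸ ((cdf μ).right_continuous _).mono_left
    (nhdsWithin_mono _ Ioi_subset_Ici_self)) (eventually_nhdsWithin_of_forall fun t ht => ?_)
  obtain ⟨x, hx, hxt⟩ := exists_lt_of_csInf_lt (invCdf_set_nonempty hLU hsupp hp) ht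
  exact hx.2.trans (monotone_cdfR hxt.le)

lemma invCdf_le_iff (hLU : L ≤ U) (hsupp : μ (Icc L U)ᶜ = 0) (hp0 : 0 < p) (hp1 : p ≤ 1)
    (x : ℝ) : invCdf L U μ p ≤ x ↔ p ≤ cdfR μ x := by
  refine ⟨fun h => (le_cdfR_invCdf hLU hsupp hp1).trans (monotone_cdfR h), fun h => ?_⟩
  rcases lt_or_ge x L with hxL | hLx
  · rw [cdfR_eq_zero_of_lt hsupp hxL] at h
    exact absurd h hp0.not_ge
  rcases le_or_gt x U with hxU | hUx
  · exact csInf_le invCdf_set_bddBelow ⟨⟨hLx, hxU⟩, h⟩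
  · exact (invCdf_mem_Icc hLU hsupp hp1).2.trans hUx.le

lemma cdfR_lt_of_lt_invCdf (hLU : L ≤ U) (hsupp : μ (Icc L U)ᶜ = 0) (hp0 : 0 < p)
    (hp1 : p ≤ 1) {x : ℝ} (hx : x < invCdf L U μ p) : cdfR μ x < p :=
  not_le.1 fun h => hx.not_ge ((invCdf_le_iff hLU hsupp hp0 hp1 x).2 h)

lemma invCdf_monotoneOn (hLU : L ≤ U) (hsupp : μ (Icc L U)ᶜ = 0) :
    MonotoneOn (invCdf L U μ) (Icc 0 1) := fun _ _ _ hp' hpp' =>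
  csInf_le_csInf invCdf_set_bddBelow (invCdf_set_nonempty hLU hsupp hp'.2)
    fun _ hx => ⟨hx.1, hpp'.trans hx.2⟩

lemma measureReal_Iio_invCdf_le (hLU : L ≤ U) (hsupp : μ (Icc L U)ᶜ = 0) (hp0 : 0 < p)
    (hp1 : p ≤ 1) : μ.real (Iio (invCdf L U μ p)) ≤ p := by
  have hlt : ∀ t < invCdf L U μ p, cdf μ t ≤ p := fun t ht =>
    cdfR_eq_cdf (μ := μ) ▸ (cdfR_lt_of_lt_invCdf hLU hsupp hp0 hp1 ht).le
  have hleft : Function.leftLim (cdf μ) (invCdf L U μ p) ≤ p :=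
    le_of_tendsto ((monotone_cdf μ).tendsto_leftLim _) (eventually_nhdsWithin_of_forall hlt)
  have hIio := (cdf μ).measure_Iio (tendsto_cdf_atBot μ) (invCdf L U μ p)
  rw [measure_cdf, sub_zero] at hIio
  exact ENNReal.toReal_le_of_le_ofReal hp0.le (hIio ▸ ENNReal.ofReal_le_ofReal hleft)

end InvCdf

section LayerCake

variable {α : Type*} [MeasurableSpace α] {ν : Measure α} [IsFiniteMeasure ν] {f : α → ℝ} {a : ℝ}

lemma integrable_max_sub_of_ae_le (hf : AEMeasurable f ν) (hfa : ∀ᵐ x ∂ν, a ≤ f x) (t : ℝ) :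
    Integrable (fun x => max (t - f x) 0) ν := by
  refine (integrable_const (max (t - a) 0)).mono'
    ((aemeasurable_const.sub hf).max aemeasurable_const).aestronglyMeasurable ?_
  filter_upwards [hfa] with x hx
  rw [Real.norm_of_nonneg (le_max_right _ _)]
  exact max_le_max (by linarith) le_rfl

/- Layer cake: `(q - y)⁺ = ∫_a^q 1{y ≤ s} ds` for `y ≥ a`. -/
lemma integral_max_sub_eq_intervalIntegral (hf : AEMeasurable f ν) (hfa : ∀ᵐ x ∂ν, a ≤ f x)
    {q : ℝ} (haq : a ≤ q) :
    ∫ x, max (q - f x) 0 ∂ν = ∫ s in a..q, ν.real {x | f x ≤ s} := by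
  have hbdd : ∀ᵐ x ∂ν, max (q - f x) 0 ≤ q - a :=
    hfa.mono fun x hx => max_le (by linarith) (by linarith)
  have hlevel : ∀ t ∈ Ioc 0 (q - a),
      ν.real {x | t ≤ max (q - f x) 0} = ν.real {x | f x ≤ q - t} := fun t ht => by
    congr 1
    ext x
    simp only [mem_ofPred_eq, le_max_iff, ht.1.not_ge, or_false]
    constructor <;> intro h <;> linarith
  rw [(integrable_max_sub_of_ae_le hf hfa q).integral_eq_integral_Ioc_meas_le
      (.of_forall fun _ => le_max_right _ _) hbdd,
    setIntegral_congr_fun measurableSet_Ioc hlevel,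
    ← intervalIntegral.integral_of_le (sub_nonneg.2 haq),
    intervalIntegral.integral_comp_sub_left (fun s => ν.real {x | f x ≤ s}), sub_sub_cancel,
    sub_zero]

end LayerCake

section InvCdfIntegral

variable {μ : Measure ℝ} [IsProbabilityMeasure μ] {L U c : ℝ}

lemma integral_invCdf (hLU : L ≤ U) (hsupp : μ (Icc L U)ᶜ = 0) (hc0 : 0 < c) (hc1 : c ≤ 1) :
    ∫ p in 0..c, invCdf L U μ p = c * invCdf L U μ c - ∫ s in L..invCdf L U μ c, cdfR μ s := by
  set q := invCdf L U μ c
  have hmono : MonotoneOn (invCdf L U μ) (Icc 0 c) :=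
    (invCdf_monotoneOn hLU hsupp).mono (Icc_subset_Icc le_rfl hc1)
  have hmeas : AEMeasurable (invCdf L U μ) (volume.restrict (Ioc 0 c)) :=
    aemeasurable_restrict_of_monotoneOn measurableSet_Ioc (hmono.mono Ioc_subset_Icc_self)
  have hL : ∀ᵐ p ∂volume.restrict (Ioc 0 c), L ≤ invCdf L U μ p :=
    (ae_restrict_mem measurableSet_Ioc).mono fun p hp =>
      (invCdf_mem_Icc hLU hsupp (hp.2.trans hc1)).1
  have hq : ∀ p ∈ Ioc 0 c, invCdf L U μ p = q - max (q - invCdf L U μ p) 0 := fun p hp => by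
    rw [max_eq_left (sub_nonneg.2 (hmono (Ioc_subset_Icc_self hp) ⟨hc0.le, le_rfl⟩ hp.2))]
    ring
  have hlevel : ∀ s ∈ Ico L q,
      (volume.restrict (Ioc 0 c)).real {p | invCdf L U μ p ≤ s} = cdfR μ s := fun s hs => by
    have hFs : cdfR μ s < c := cdfR_lt_of_lt_invCdf hLU hsupp hc0 hc1 hs.2
    have hset : {p | invCdf L U μ p ≤ s} ∩ Ioc 0 c = Ioc 0 (cdfR μ s) := by
      ext p
      simp only [mem_inter_iff, mem_ofPred_eq, mem_Ioc]
      constructor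
      · rintro ⟨hps, hp0, hpc⟩
        exact ⟨hp0, (invCdf_le_iff hLU hsupp hp0 (hpc.trans hc1) s).1 hps⟩
      · rintro ⟨hp0, hps⟩
        have hpc : p ≤ c := hps.trans hFs.le
        exact ⟨(invCdf_le_iff hLU hsupp hp0 (hpc.trans hc1) s).2 hps, hp0, hpc⟩
    rw [measureReal_restrict_apply' measurableSet_Ioc, hset,
      Real.volume_real_Ioc_of_le (cdfR_nonneg s), sub_zero]
  have hLq : L ≤ q := (invCdf_mem_Icc hLU hsupp hc1).1
  have hcdf : ∫ s in L..q, (volume.restrict (Ioc 0 c)).real {p | invCdf L U μ p ≤ s}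
      = ∫ s in L..q, cdfR μ s := by
    refine intervalIntegral.integral_congr_ae ?_
    filter_upwards [Measure.ae_ne volume q] with s hsq hs
    rw [uIoc_of_le hLq] at hs
    exact hlevel s ⟨hs.1.le, lt_of_le_of_ne hs.2 hsq⟩
  rw [intervalIntegral.integral_of_le hc0.le, setIntegral_congr_fun measurableSet_Ioc hq,
    integral_sub (integrable_const q) (integrable_max_sub_of_ae_le hmeas hL q),
    integral_max_sub_eq_intervalIntegral hmeas hL hLq, hcdf, integral_const,
    measureReal_restrict_apply_univ, Real.volume_real_Ioc_of_le hc0.le, sub_zero, smul_eq_mul]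

end InvCdfIntegral

section Quantile

variable {μ : Measure ℝ} [IsFiniteMeasure μ] {Y : ℝ → ℝ} {t₀ a : ℝ}

/- `t ↦ E(t - Y)⁺` is convex with right slope `μ{Y ≤ t₀}` and left slope `μ{Y < t₀}` at `t₀`. -/
lemma le_integral_max_sub_of_quantile (hY : Measurable Y)
    (hint : ∀ t, Integrable (fun x => max (t - Y x) 0) μ)
    (hlt : μ.real {x | Y x < t₀} ≤ a) (hle : a ≤ μ.real {x | Y x ≤ t₀}) (t : ℝ) :
    ∫ x, max (t₀ - Y x) 0 ∂μ + (t - t₀) * a ≤ ∫ x, max (t - Y x) 0 ∂μ := by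
  obtain ⟨s, hs, hsa, hpt⟩ : ∃ s, MeasurableSet s ∧ (t - t₀) * a ≤ μ.real s * (t - t₀) ∧
      ∀ x, max (t₀ - Y x) 0 + s.indicator (fun _ => t - t₀) x ≤ max (t - Y x) 0 := by
    rcases le_total t₀ t with h | h
    · refine ⟨{x | Y x ≤ t₀}, hY measurableSet_Iic, by nlinarith, fun x => ?_⟩
      by_cases hx : Y x ≤ t₀ <;> simp only [indicator_apply, mem_ofPred_eq, hx, if_true,
        if_false, add_zero] <;> grind
    · refine ⟨{x | Y x < t₀}, hY measurableSet_Iio, by nlinarith, fun x => ?_⟩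
      by_cases hx : Y x < t₀ <;> simp only [indicator_apply, mem_ofPred_eq, hx, if_true,
        if_false, add_zero] <;> grind
  have hint_s : Integrable (s.indicator fun _ => t - t₀) μ := (integrable_const _).indicator hs
  calc ∫ x, max (t₀ - Y x) 0 ∂μ + (t - t₀) * a
      ≤ ∫ x, max (t₀ - Y x) 0 ∂μ + μ.real s * (t - t₀) := by linarith
    _ = ∫ x, (max (t₀ - Y x) 0 + s.indicator (fun _ => t - t₀) x) ∂μ := by
      rw [integral_add (hint t₀) hint_s, integral_indicator_const _ hs, smul_eq_mul]
    _ ≤ ∫ x, max (t - Y x) 0 ∂μ := integral_mono ((hint t₀).add hint_s) (hint t) hpt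

lemma rcvar_eq_of_quantile {δ : ℝ} (hδ : δ < 1) (hY : Measurable Y)
    (hint : ∀ t, Integrable (fun x => max (t - Y x) 0) μ)
    (hlt : μ.real {x | Y x < t₀} ≤ 1 - δ) (hle : 1 - δ ≤ μ.real {x | Y x ≤ t₀}) :
    rcvar δ μ Y = t₀ - (1 - δ)⁻¹ * ∫ x, max (t₀ - Y x) 0 ∂μ := by
  have hmax : ∀ t, t - (1 - δ)⁻¹ * ∫ x, max (t - Y x) 0 ∂μ
      ≤ t₀ - (1 - δ)⁻¹ * ∫ x, max (t₀ - Y x) 0 ∂μ := fun t => by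
    have hslope : t - t₀ ≤ (1 - δ)⁻¹ * (∫ x, max (t - Y x) 0 ∂μ - ∫ x, max (t₀ - Y x) 0 ∂μ) := by
      rw [le_inv_mul_iff₀ (sub_pos.2 hδ)]
      linarith [le_integral_max_sub_of_quantile hY hint hlt hle t]
    linarith [mul_sub (1 - δ)⁻¹ (∫ x, max (t - Y x) 0 ∂μ) (∫ x, max (t₀ - Y x) 0 ∂μ)]
  exact le_antisymm (ciSup_le hmax) (le_ciSup ⟨_, forall_mem_range.2 hmax⟩ t₀)

end Quantile

section OneMaxSearch

variable {μ : Measure ℝ} {L U v q : ℝ}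

lemma measurable_omsProfit (L v : ℝ) : Measurable (omsProfit L v) :=
  Measurable.ite measurableSet_Iic measurable_id measurable_const

lemma ae_le_omsProfit (hsupp : μ (Icc L U)ᶜ = 0) :
    ∀ᵐ x ∂μ, L ≤ omsProfit L v x := by
  rw [ae_iff]
  refine measure_mono_null (fun x (hx : ¬L ≤ omsProfit L v x) (hxLU : x ∈ Icc L U) => hx ?_) hsupp
  unfold omsProfit
  split_ifs
  exacts [hxLU.1, le_rfl]

lemma setOf_omsProfit_le (hLq : L ≤ q) :
    {x | omsProfit L v x ≤ q} = Iic q ∪ Ioi v := by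
  ext x
  simp only [omsProfit, mem_ofPred_eq, mem_union, mem_Iic, mem_Ioi]
  split_ifs with hxv <;> grind

lemma setOf_omsProfit_lt_subset : {x | omsProfit L v x < q} ⊆ Iio q ∪ Ioi v := by
  intro x (hx : omsProfit L v x < q)
  unfold omsProfit at hx
  split_ifs at hx with hxv
  exacts [Or.inl hx, Or.inr (not_le.1 hxv)]

variable [IsProbabilityMeasure μ]

lemma measureReal_Ioi_eq_one_sub_cdfR (v : ℝ) : μ.real (Ioi v) = 1 - cdfR μ v := by
  rw [← compl_Iic, probReal_compl_eq_one_sub measurableSet_Iic]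
  rfl

lemma measureReal_omsProfit_le (hLq : L ≤ q) (hqv : q ≤ v) :
    μ.real {x | omsProfit L v x ≤ q} = cdfR μ q + (1 - cdfR μ v) := by
  rw [setOf_omsProfit_le hLq, measureReal_union (Iic_disjoint_Ioi hqv) measurableSet_Ioi,
    measureReal_Ioi_eq_one_sub_cdfR]
  rfl

lemma measureReal_omsProfit_lt_le :
    μ.real {x | omsProfit L v x < q} ≤ μ.real (Iio q) + (1 - cdfR μ v) := by
  rw [← measureReal_Ioi_eq_one_sub_cdfR]
  exact (measureReal_mono setOf_omsProfit_lt_subset).trans (measureReal_union_le _ _)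

lemma integral_max_sub_omsProfit (hsupp : μ (Icc L U)ᶜ = 0) (hLq : L ≤ q) (hqv : q ≤ v) :
    ∫ x, max (q - omsProfit L v x) 0 ∂μ = (q - L) * (1 - cdfR μ v) + ∫ s in L..q, cdfR μ s := by
  rw [integral_max_sub_eq_intervalIntegral (measurable_omsProfit L v).aemeasurable
      (ae_le_omsProfit hsupp) hLq,
    intervalIntegral.integral_congr fun s hs => measureReal_omsProfit_le
      (uIcc_of_le hLq ▸ hs).1 ((uIcc_of_le hLq ▸ hs).2.trans hqv),
    intervalIntegral.integral_add monotone_cdfR.intervalIntegrable intervalIntegrable_const,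
    intervalIntegral.integral_const, smul_eq_mul]
  ring

lemma rcvar_omsProfit_of_quantile (hsupp : μ (Icc L U)ᶜ = 0) {δ : ℝ} (hδ : δ < 1)
    (hLq : L ≤ q) (hqv : q ≤ v) (hlt : μ.real {x | omsProfit L v x < q} ≤ 1 - δ)
    (hle : 1 - δ ≤ μ.real {x | omsProfit L v x ≤ q}) :
    rcvar δ μ (omsProfit L v)
      = q - (1 - δ)⁻¹ * ((q - L) * (1 - cdfR μ v) + ∫ s in L..q, cdfR μ s) := by
  rw [rcvar_eq_of_quantile hδ (measurable_omsProfit L v)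
      (integrable_max_sub_of_ae_le (measurable_omsProfit L v).aemeasurable
        (ae_le_omsProfit hsupp)) hlt hle,
    integral_max_sub_omsProfit hsupp hLq hqv]

end OneMaxSearch

theorem oms_cvar_integral_general (L U : ℝ) (hLU : L ≤ U)
    (μ : Measure ℝ) (hp : IsProbabilityMeasure μ) (hsupp : μ (Icc L U)ᶜ = 0)
    (δ : ℝ) (hδ : δ ∈ Ico (0:ℝ) 1) (v : ℝ) (hv : v ∈ Icc L U) :
    rcvar δ μ (fun x => omsProfit L v x) =
      if cdfR μ v ≤ δ then L
      else (1 - δ)⁻¹ * ((1 - cdfR μ v) * L + ∫ t in (0:ℝ)..(cdfR μ v - δ), invCdf L U μ t) := by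
  obtain ⟨hδ0, hδ1⟩ := hδ
  split_ifs with hFv
  · have hlt : μ.real {x | omsProfit L v x < L} = 0 :=
      (measureReal_eq_zero_iff).2 (by simpa only [not_le] using ae_iff.1 (ae_le_omsProfit hsupp))
    rw [rcvar_omsProfit_of_quantile hsupp hδ1 le_rfl hv.1 (by linarith)
      (by rw [measureReal_omsProfit_le le_rfl hv.1]; linarith [cdfR_nonneg (μ := μ) L])]
    simp
  · have hc0 : 0 < cdfR μ v - δ := by linarith
    have hc1 : cdfR μ v - δ ≤ 1 := by linarith [cdfR_le_one (μ := μ) v]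
    set q := invCdf L U μ (cdfR μ v - δ)
    have hqv : q ≤ v := (invCdf_le_iff hLU hsupp hc0 hc1 v).2 (by linarith)
    rw [rcvar_omsProfit_of_quantile hsupp hδ1 (invCdf_mem_Icc hLU hsupp hc1).1 hqv
      (measureReal_omsProfit_lt_le.trans
        (by linarith [measureReal_Iio_invCdf_le hLU hsupp hc0 hc1]))
      (by rw [measureReal_omsProfit_le (invCdf_mem_Icc hLU hsupp hc1).1 hqv]
          linarith [le_cdfR_invCdf hLU hsupp hc1]),
      integral_invCdf hLU hsupp hc0 hc1]
    field_simp
    ring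

/-- Lemma: integral representation of the reward-`CVaR_δ` of the one-max-search profit in
terms of the inverse CDF of the threshold distribution. -/
theorem oms_cvar_integral (L U : ℝ) (hL : 0 < L) (hLU : L ≤ U)
    (μ : Measure ℝ) (hp : IsProbabilityMeasure μ) (hsupp : μ (Icc L U)ᶜ = 0)
    (δ : ℝ) (hδ : δ ∈ Ico (0:ℝ) 1) (v : ℝ) (hv : v ∈ Icc L U) :
    rcvar δ μ (fun x => omsProfit L v x) =
      if cdfR μ v ≤ δ then L
      else (1 - δ)⁻¹ * ((1 - cdfR μ v) * L + ∫ t in (0:ℝ)..(cdfR μ v - δ), invCdf L U μ t) :=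
  oms_cvar_integral_general L U hLU μ hp hsupp δ hδ v hv
end
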